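/- Let ε ∈ (0, 1/2). Let B ∈ ℝ^{m×n} and let R ∈ ℝ^{n×n} be invertible, and suppose that every singular value of B R^{−1} lies in the interval [1−ε, 1+ε] (equivalently, (1−ε)‖x‖₂ ≤ ‖B R^{−1} x‖₂ ≤ (1+ε)‖x‖₂ for all x ∈ ℝ^n). Then B has rank n, and for every j ∈ [m], (1+2ε)^{−2} · σ_j(B) ≤ ‖e_jᵀ B R^{−1}‖₂² ≤ (1−2ε)^{−2} · σ_j(B). -/

import Mathlib

/-! With `A = B R⁻¹` we have `B = A R`, and leverage scores do not change under right
multiplication by an invertible matrix, so `σ_j(B) = σ_j(A) = ‖z‖²` for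
`z = A (AᵀA)⁻¹ a_j`, the projection of `e_j` onto the column space of `A` (`a_j` is the `j`-th
row of `A`). Since `Aᵀ z = a_j`, Cauchy–Schwarz gives `‖a_j‖² = ⟨z, A a_j⟩ ≤ (1 + ε) ‖z‖ ‖a_j‖`
and `(1 - ε) ‖z‖² = (1 - ε) ⟨a_j, (AᵀA)⁻¹ a_j⟩ ≤ ‖a_j‖ ‖z‖`. Finally `(1 - ε)(1 + 2ε) ≥ 1` and
`(1 + ε)(1 - 2ε) ≤ 1`. -/

open Matrix

/-- The Euclidean (ℓ₂) norm of a vector in `ℝ^k`. -/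
noncomputable def l2 {k : ℕ} (x : Fin k → ℝ) : ℝ := Real.sqrt (∑ i, x i ^ 2)

/-- The leverage score of row `j` of `B`: `σ_j(B) = b_jᵀ (BᵀB)⁻¹ b_j`. -/
noncomputable def levScore {m n : ℕ} (B : Matrix (Fin m) (Fin n) ℝ) (j : Fin m) : ℝ :=
  B j ⬝ᵥ ((Bᵀ * B)⁻¹).mulVec (B j)

lemma l2_nonneg {k : ℕ} (x : Fin k → ℝ) : 0 ≤ l2 x := Real.sqrt_nonneg _

lemma l2_sq {k : ℕ} (x : Fin k → ℝ) : l2 x ^ 2 = ∑ i, x i ^ 2 :=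
  Real.sq_sqrt (by positivity)

lemma dotProduct_self_eq_l2_sq {k : ℕ} (x : Fin k → ℝ) : x ⬝ᵥ x = l2 x ^ 2 := by
  rw [l2_sq]; simp [dotProduct, sq]

lemma dotProduct_le_l2_mul_l2 {k : ℕ} (x y : Fin k → ℝ) : x ⬝ᵥ y ≤ l2 x * l2 y :=
  Real.sum_mul_le_sqrt_mul_sqrt _ _ _

lemma l2_eq_zero_iff {k : ℕ} {x : Fin k → ℝ} : l2 x = 0 ↔ x = 0 := by
  rw [← sq_eq_zero_iff, ← dotProduct_self_eq_l2_sq, dotProduct_self_eq_zero]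

lemma sq_le_sq_of_sq_le_mul {p r : ℝ} (h : p ^ 2 ≤ r * p) : p ^ 2 ≤ r ^ 2 := by
  nlinarith [sq_nonneg (r - p)]

lemma inv_sq_one_add_two_mul_le {ε : ℝ} (h0 : 0 ≤ ε) (h1 : ε ≤ 1 / 2) :
    ((1 + 2 * ε) ^ 2)⁻¹ ≤ (1 - ε) ^ 2 := by
  have : 1 ≤ (1 - ε) * (1 + 2 * ε) := by nlinarith
  rw [inv_le_iff_one_le_mul₀ (by positivity), ← mul_pow]
  exact one_le_pow₀ this

lemma sq_one_add_le_inv_sq {ε : ℝ} (h0 : 0 ≤ ε) (h1 : ε < 1 / 2) :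
    (1 + ε) ^ 2 ≤ ((1 - 2 * ε) ^ 2)⁻¹ := by
  have : (1 + ε) * (1 - 2 * ε) ≤ 1 := by nlinarith
  have hpos : 0 < 1 - 2 * ε := by linarith
  rw [inv_eq_one_div, le_div_iff₀ (by positivity), ← mul_pow]
  exact pow_le_one₀ (by positivity) this

section

variable {m n : ℕ}

lemma mulVec_injective_of_le_l2_mulVec {A : Matrix (Fin m) (Fin n) ℝ} {c : ℝ} (hc : 0 < c)
    (h : ∀ x, c * l2 x ≤ l2 (A *ᵥ x)) : Function.Injective A.mulVec := by
  refine (injective_iff_map_eq_zero A.mulVecLin).2 fun x hx => ?_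
  have : c * l2 x ≤ 0 := by simpa [l2_eq_zero_iff.2 (show A *ᵥ x = 0 from hx)] using h x
  exact l2_eq_zero_iff.1 (le_antisymm (nonpos_of_mul_nonpos_right this hc) (l2_nonneg x))

lemma isUnit_det_transpose_mul_self {A : Matrix (Fin m) (Fin n) ℝ}
    (hA : Function.Injective A.mulVec) : IsUnit (Aᵀ * A).det :=
  (PosDef.conjTranspose_mul_self A hA).det_pos.ne'.isUnit

lemma rank_eq_of_mulVec_injective {A : Matrix (Fin m) (Fin n) ℝ}
    (hA : Function.Injective A.mulVec) : A.rank = n := by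
  rw [← rank_transpose_mul_self, rank_of_isUnit _ ((isUnit_iff_isUnit_det _).2
    (isUnit_det_transpose_mul_self hA)), Fintype.card_fin]

lemma levScore_mul_of_isUnit_det (A : Matrix (Fin m) (Fin n) ℝ) {R : Matrix (Fin n) (Fin n) ℝ}
    (hR : IsUnit R.det) (j : Fin m) : levScore (A * R) j = levScore A j := by
  have hinv : ((A * R)ᵀ * (A * R))⁻¹ = R⁻¹ * (Aᵀ * A)⁻¹ * Rᵀ⁻¹ := by
    rw [transpose_mul, Matrix.mul_assoc, ← Matrix.mul_assoc Aᵀ, Matrix.mul_inv_rev,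
      Matrix.mul_inv_rev, Matrix.mul_assoc]
  have hRt : Rᵀ⁻¹ * Rᵀ = 1 := nonsing_inv_mul _ (by rwa [det_transpose])
  have hrow : (A * R) j = A j ᵥ* R := rfl
  rw [levScore, levScore, hinv, hrow, dotProduct_mulVec, vecMul_vecMul, ← Matrix.mul_assoc,
    ← Matrix.mul_assoc, mul_nonsing_inv _ hR, Matrix.one_mul, dotProduct_comm, dotProduct_mulVec,
    ← mulVec_transpose, dotProduct_comm, dotProduct_mulVec, vecMul_vecMul, Matrix.mul_assoc, hRt,
    Matrix.mul_one]

lemma transpose_mulVec_mulVec_inv_mulVec {A : Matrix (Fin m) (Fin n) ℝ}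
    (hA : IsUnit (Aᵀ * A).det) (v : Fin n → ℝ) : Aᵀ *ᵥ (A *ᵥ ((Aᵀ * A)⁻¹ *ᵥ v)) = v := by
  rw [mulVec_mulVec, mulVec_mulVec, mul_nonsing_inv _ hA, one_mulVec]

lemma levScore_eq_l2_sq {A : Matrix (Fin m) (Fin n) ℝ} (hA : IsUnit (Aᵀ * A).det) (j : Fin m) :
    levScore A j = l2 (A *ᵥ ((Aᵀ * A)⁻¹ *ᵥ A j)) ^ 2 := by
  set w := (Aᵀ * A)⁻¹ *ᵥ A j
  calc levScore A j = (Aᵀ *ᵥ (A *ᵥ w)) ⬝ᵥ w := by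
        rw [transpose_mulVec_mulVec_inv_mulVec hA]; rfl
    _ = l2 (A *ᵥ w) ^ 2 := by
      rw [mulVec_transpose, ← dotProduct_mulVec, dotProduct_self_eq_l2_sq]

lemma l2_sq_row_le {A : Matrix (Fin m) (Fin n) ℝ} {C : ℝ} (hA : IsUnit (Aᵀ * A).det)
    (h : ∀ x, l2 (A *ᵥ x) ≤ C * l2 x) (j : Fin m) :
    l2 (A j) ^ 2 ≤ C ^ 2 * levScore A j := by
  set z := A *ᵥ ((Aᵀ * A)⁻¹ *ᵥ A j)
  have hz : l2 (A j) ^ 2 ≤ C * l2 z * l2 (A j) :=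
    calc l2 (A j) ^ 2 = (Aᵀ *ᵥ z) ⬝ᵥ A j := by
          rw [transpose_mulVec_mulVec_inv_mulVec hA, dotProduct_self_eq_l2_sq]
      _ = z ⬝ᵥ (A *ᵥ A j) := by rw [mulVec_transpose, dotProduct_mulVec]
      _ ≤ l2 z * (C * l2 (A j)) :=
          (dotProduct_le_l2_mul_l2 _ _).trans (mul_le_mul_of_nonneg_left (h _) (l2_nonneg z))
      _ = C * l2 z * l2 (A j) := by ring
  rw [levScore_eq_l2_sq hA, ← mul_pow]
  exact sq_le_sq_of_sq_le_mul hz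

lemma le_l2_sq_row {A : Matrix (Fin m) (Fin n) ℝ} {c : ℝ} (hc : 0 < c)
    (h : ∀ x, c * l2 x ≤ l2 (A *ᵥ x)) (j : Fin m) :
    c ^ 2 * levScore A j ≤ l2 (A j) ^ 2 := by
  have hA := isUnit_det_transpose_mul_self (mulVec_injective_of_le_l2_mulVec hc h)
  set w := (Aᵀ * A)⁻¹ *ᵥ A j
  have hw : (c * l2 (A *ᵥ w)) ^ 2 ≤ l2 (A j) * (c * l2 (A *ᵥ w)) :=
    calc (c * l2 (A *ᵥ w)) ^ 2 = c * (c * (A j ⬝ᵥ w)) := by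
          rw [mul_pow, ← levScore_eq_l2_sq hA, levScore]; ring
      _ ≤ c * (c * (l2 (A j) * l2 w)) := by gcongr; exact dotProduct_le_l2_mul_l2 _ _
      _ = c * (l2 (A j) * (c * l2 w)) := by ring
      _ ≤ c * (l2 (A j) * l2 (A *ᵥ w)) := by gcongr; exacts [l2_nonneg _, h w]
      _ = l2 (A j) * (c * l2 (A *ᵥ w)) := by ring
  rw [levScore_eq_l2_sq hA, ← mul_pow]
  exact sq_le_sq_of_sq_le_mul hw

end

theorem stmt10 {m n : ℕ} (ε : ℝ) (hε : ε ∈ Set.Ioo (0 : ℝ) (1/2))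
    (B : Matrix (Fin m) (Fin n) ℝ) (R : Matrix (Fin n) (Fin n) ℝ) (hR : IsUnit R.det)
    (h : ∀ x : Fin n → ℝ, (1 - ε) * l2 x ≤ l2 ((B * R⁻¹).mulVec x) ∧
          l2 ((B * R⁻¹).mulVec x) ≤ (1 + ε) * l2 x) :
    B.rank = n ∧
      ∀ j : Fin m,
        ((1 + 2*ε)^2)⁻¹ * levScore B j ≤ ∑ i, ((B * R⁻¹) j i)^2 ∧
        (∑ i, ((B * R⁻¹) j i)^2) ≤ ((1 - 2*ε)^2)⁻¹ * levScore B j := by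
  obtain ⟨hε0, hε2⟩ := hε
  set A := B * R⁻¹
  have hAR : A * R = B := nonsing_inv_mul_cancel_right R B hR
  have hinj := mulVec_injective_of_le_l2_mulVec (by linarith) fun x => (h x).1
  have hA := isUnit_det_transpose_mul_self hinj
  refine ⟨?_, fun j => ?_⟩
  · rw [← hAR, rank_mul_eq_left_of_isUnit_det _ _ hR, rank_eq_of_mulVec_injective hinj]
  have hσ : 0 ≤ levScore A j := levScore_eq_l2_sq hA j ▸ sq_nonneg _
  rw [← hAR, levScore_mul_of_isUnit_det A hR, ← l2_sq]
  constructor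
  · calc ((1 + 2 * ε) ^ 2)⁻¹ * levScore A j ≤ (1 - ε) ^ 2 * levScore A j := by
          gcongr; exact inv_sq_one_add_two_mul_le hε0.le hε2.le
      _ ≤ l2 (A j) ^ 2 := le_l2_sq_row (by linarith) (fun x => (h x).1) j
  · calc l2 (A j) ^ 2 ≤ (1 + ε) ^ 2 * levScore A j := l2_sq_row_le hA (fun x => (h x).2) j
      _ ≤ ((1 - 2 * ε) ^ 2)⁻¹ * levScore A j := by
          gcongr; exact sq_one_add_le_inv_sq hε0.le hε2
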